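/- Let g : ℝ → ℂ be integrable and band-limited to f_g > 0 (𝓕g(ξ) = 0 for |ξ| ≥ f_g), let f > 0, and let f_c satisfy f_g ≤ f_c ≤ 2f − f_g. Fix real a, b, L. Then for every frequency ξ with |ξ| < f_c, the Fourier transform of the mixed signal t ↦ 2·cos(2πft)·(a·g(t−L)·cos(2πf(t−L)) − b·g(t−L)·sin(2πf(t−L))) at ξ equals (a·cos(2πfL) + b·sin(2πfL))·e^{−2πiξL}·𝓕g(ξ). In other words, after ideal low-pass filtering with cut-off f_c, the in-phase demodulation branch recovers exactly the delayed baseband pulse (a·cos(2πfL) + b·sin(2πfL))·g(t−L). -/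

import Mathlib

/-!
Writing `θ = 2πft` and `δ = 2πfL`, the mixing factor `2 cos θ · (a cos(θ - δ) - b sin(θ - δ))`
equals `a cos δ + b sin δ` plus two sidebands, multiples of `e^{±2iθ}`. Multiplying the delayed
pulse by `e^{2πict}` shifts its spectrum by `c`, so the sidebands have spectrum `𝓕g(ξ ∓ 2f)`, which
vanishes for `|ξ| < f_c ≤ 2f - f_g` because `g` is band-limited to `f_g`. What survives is the
baseband term, whose spectrum is `(a cos δ + b sin δ) e^{-2πiξL} 𝓕g(ξ)` by the shift theorem.
-/

open Real MeasureTheory Complex FourierTransform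

namespace Real

variable {E : Type*} [NormedAddCommGroup E] [NormedSpace ℂ E]

section InnerProductSpace

variable {V : Type*} [NormedAddCommGroup V] [InnerProductSpace ℝ V] [FiniteDimensional ℝ V]
  [MeasurableSpace V] [BorelSpace V]

theorem fourier_add_apply {f g : V → E} (hf : Integrable f) (hg : Integrable g) (w : V) :
    𝓕 (fun v ↦ f v + g v) w = 𝓕 f w + 𝓕 g w := by
  simp only [fourier_eq, smul_add]
  exact integral_add ((fourierIntegral_convergent_iff w).2 hf)
    ((fourierIntegral_convergent_iff w).2 hg)

theorem fourier_const_smul_apply (f : V → E) (r : ℂ) (w : V) :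
    𝓕 (fun v ↦ r • f v) w = r • 𝓕 f w := by
  simp only [fourier_eq, smul_comm _ r, integral_smul]

end InnerProductSpace

theorem fourier_comp_sub_right (f : ℝ → E) (L ξ : ℝ) :
    𝓕 (fun t ↦ f (t - L)) ξ = 𝐞 (-(L * ξ)) • 𝓕 f ξ := by
  simp only [fourier_real_eq, Circle.smul_def]
  rw [← integral_add_right_eq_self _ L, ← integral_smul]
  congr 1 with t
  rw [add_sub_cancel_right, smul_smul, ← Circle.coe_mul, ← AddChar.map_add_eq_mul]
  ring_nf

theorem fourier_fourierChar_smul (f : ℝ → E) (c ξ : ℝ) :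
    𝓕 (fun t ↦ 𝐞 (c * t) • f t) ξ = 𝓕 f (ξ - c) := by
  simp only [fourier_real_eq]
  congr 1 with t
  rw [smul_smul, ← AddChar.map_add_eq_mul]
  ring_nf

theorem integrable_fourierChar_smul {f : ℝ → E} (hf : Integrable f) (c : ℝ) :
    Integrable (fun t ↦ 𝐞 (c * t) • f t) := by
  have hmeas : AEStronglyMeasurable (fun t ↦ 𝐞 (c * t) • f t) :=
    (continuous_fourierChar.comp (continuous_const_mul c)).aestronglyMeasurable.smul hf.1
  exact (integrable_norm_iff hmeas).1 (by simpa only [Circle.norm_smul] using hf.norm)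

end Real

theorem inphase_mixing_eq_baseband_add_sidebands (a b f L t : ℝ) (z : ℂ) :
    2 * (Real.cos (2 * π * f * t) : ℂ) *
        ((a : ℂ) * z * Real.cos (2 * π * f * (t - L))
          - (b : ℂ) * z * Real.sin (2 * π * f * (t - L)))
      = ((a * Real.cos (2 * π * f * L) + b * Real.sin (2 * π * f * L) : ℝ) : ℂ) • z
        + ((a + b * I) / 2 * 𝐞 (-(f * L))) • 𝐞 (2 * f * t) • z
        + ((a - b * I) / 2 * 𝐞 (f * L)) • 𝐞 (-(2 * f) * t) • z := by
  have hchar (x : ℝ) : (𝐞 x : ℂ) = Complex.cos (2 * π * x) + Complex.sin (2 * π * x) * I := by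
    rw [fourierChar_apply, exp_mul_I]; push_cast; rfl
  set θ : ℂ := 2 * π * f * t
  set δ : ℂ := 2 * π * f * L
  have h2θ : (2 * π * (2 * f * t : ℝ) : ℂ) = 2 * θ := by push_cast; ring
  have hm2θ : (2 * π * (-(2 * f) * t : ℝ) : ℂ) = -(2 * θ) := by push_cast; ring
  have hδ : (2 * π * (f * L : ℝ) : ℂ) = δ := by push_cast; ring
  have hmδ : (2 * π * (-(f * L) : ℝ) : ℂ) = -δ := by push_cast; ring
  have hθδ : (2 * π * f * (t - L) : ℂ) = θ - δ := by ring
  simp only [smul_eq_mul, Circle.smul_def, hchar, h2θ, hm2θ, hδ, hmδ]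
  push_cast
  rw [hθδ, show (2 * π * f * t : ℂ) = θ from rfl, show (2 * π * f * L : ℂ) = δ from rfl]
  simp only [Complex.cos_neg, Complex.sin_neg, Complex.cos_two_mul, Complex.sin_two_mul,
    Complex.cos_sub, Complex.sin_sub]
  ring_nf
  rw [I_sq]
  ring

theorem inphase_demodulation_recovers_baseband_general
    (g : ℝ → ℂ) (hg : Integrable g)
    (f_g f f_c : ℝ)
    (hband : ∀ ξ : ℝ, f_g ≤ |ξ| → FourierTransform.fourier g ξ = 0)
    (hfc_hi : f_c ≤ 2 * f - f_g)
    (a b L : ℝ) :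
    ∀ ξ : ℝ, |ξ| < f_c →
      FourierTransform.fourier
        (fun t => 2 * (Real.cos (2 * π * f * t) : ℂ) *
          ((a : ℂ) * g (t - L) * (Real.cos (2 * π * f * (t - L)) : ℂ)
            - (b : ℂ) * g (t - L) * (Real.sin (2 * π * f * (t - L)) : ℂ))) ξ =
      ((a * Real.cos (2 * π * f * L) + b * Real.sin (2 * π * f * L) : ℝ) : ℂ)
        * Complex.exp (-2 * π * Complex.I * (ξ : ℂ) * (L : ℂ))
        * FourierTransform.fourier g ξ := by
  intro ξ hξ
  have hshift : Integrable (fun t ↦ g (t - L)) := hg.comp_sub_right L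
  have hsideband_int (r : ℂ) (ν : ℝ) : Integrable (fun t ↦ r • 𝐞 (ν * t) • g (t - L)) :=
    (integrable_fourierChar_smul hshift ν).fun_smul r
  have hsideband (c : ℝ) (hc : 2 * f ≤ |c|) : 𝓕 (fun t ↦ 𝐞 (c * t) • g (t - L)) ξ = 0 := by
    rw [fourier_fourierChar_smul, fourier_comp_sub_right, hband, smul_zero]
    linarith [abs_sub_abs_le_abs_sub c ξ, abs_sub_comm c ξ]
  rw [funext fun t ↦ inphase_mixing_eq_baseband_add_sidebands a b f L t (g (t - L)),
    fourier_add_apply ?_ (hsideband_int _ _),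
    fourier_add_apply (hshift.fun_smul (_ : ℂ)) (hsideband_int _ _),
    fourier_const_smul_apply, fourier_const_smul_apply, fourier_const_smul_apply,
    hsideband _ (le_abs_self _), hsideband _ (abs_neg (2 * f) ▸ le_abs_self _),
    fourier_comp_sub_right, Circle.smul_def, fourierChar_apply]
  · simp only [smul_eq_mul]
    push_cast
    ring_nf
  · exact (hshift.fun_smul (_ : ℂ)).add (hsideband_int _ _)

/-- In-phase demodulation branch: for `g` integrable and band-limited to `f_g`,
with `f_g ≤ f_c ≤ 2f − f_g`, the Fourier transform of the mixed signal
`t ↦ 2·cos(2πft)·(a·g(t−L)·cos(2πf(t−L)) − b·g(t−L)·sin(2πf(t−L)))` at any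
frequency `|ξ| < f_c` equals `(a·cos(2πfL) + b·sin(2πfL))·e^{−2πiξL}·𝓕g(ξ)`;
i.e. after ideal low-pass filtering with cut-off `f_c` the branch recovers the
delayed baseband pulse `(a·cos(2πfL) + b·sin(2πfL))·g(t−L)`. -/
theorem inphase_demodulation_recovers_baseband
    (g : ℝ → ℂ) (hg : Integrable g)
    (f_g f f_c : ℝ) (hfg : 0 < f_g)
    (hband : ∀ ξ : ℝ, f_g ≤ |ξ| → FourierTransform.fourier g ξ = 0)
    (hf : 0 < f) (hfc_lo : f_g ≤ f_c) (hfc_hi : f_c ≤ 2 * f - f_g)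
    (a b L : ℝ) :
    ∀ ξ : ℝ, |ξ| < f_c →
      FourierTransform.fourier
        (fun t => 2 * (Real.cos (2 * π * f * t) : ℂ) *
          ((a : ℂ) * g (t - L) * (Real.cos (2 * π * f * (t - L)) : ℂ)
            - (b : ℂ) * g (t - L) * (Real.sin (2 * π * f * (t - L)) : ℂ))) ξ =
      ((a * Real.cos (2 * π * f * L) + b * Real.sin (2 * π * f * L) : ℝ) : ℂ)
        * Complex.exp (-2 * π * Complex.I * (ξ : ℂ) * (L : ℂ))
        * FourierTransform.fourier g ξ :=
  inphase_demodulation_recovers_baseband_general g hg f_g f f_c hband hfc_hi a b L
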